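/- Let A be a normalized deterministic parity tree automaton over a finite nonempty alphabet Σ. Then L(A) ∈ Π⁰₂(T_Σ) (L(A) is a countable intersection of open sets) if and only if A contains no (0,1)-flower. -/

import Mathlib

open Filter

/-- A deterministic parity tree automaton over alphabet `Alpha` with state set `Q`. -/
structure DPTA (Alpha : Type) (Q : Type) where
  init : Q
  delta : Q → Alpha → Q × Q
  rank : Q → ℕ

namespace DPTA

variable {Alpha Q : Type}

/-- The state reached in one step from `q` reading letter `s` in direction `d`. -/
def next (M : DPTA Alpha Q) (q : Q) (s : Alpha) (d : Bool) : Q :=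
  if d then (M.delta q s).2 else (M.delta q s).1

/-- The state of the run started in `q` on the tree `t` at the node `v`
(nodes are words over `{0,1}`, head = first direction from the root). -/
def runFrom (M : DPTA Alpha Q) : Q → (List Bool → Alpha) → List Bool → Q
  | q, _, [] => q
  | q, t, d :: v => runFrom M (M.next q (t []) d) (fun u => t (d :: u)) v

/-- The state of the (unique) run of `M` on `t` at node `v`. -/
def run (M : DPTA Alpha Q) (t : List Bool → Alpha) (v : List Bool) : Q :=
  runFrom M M.init t v

/-- Parity acceptance: the largest value occurring infinitely often is even. -/
def ParityAccept (f : ℕ → ℕ) : Prop :=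
  Even (sSup {r : ℕ | ∃ᶠ n in atTop, f n = r})

/-- The prefix of length `n` of an infinite path. -/
def pref (π : ℕ → Bool) (n : ℕ) : List Bool :=
  List.ofFn fun i : Fin n => π i

/-- The run of `M` on `t` started at state `q` is accepting. -/
def AcceptsFrom (M : DPTA Alpha Q) (q : Q) (t : List Bool → Alpha) : Prop :=
  ∀ π : ℕ → Bool, ParityAccept fun n => M.rank (runFrom M q t (pref π n))

/-- The language recognised by `M`: trees with accepting run. -/
def Lang (M : DPTA Alpha Q) : Set (List Bool → Alpha) :=
  {t | M.AcceptsFrom M.init t}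

/-- The state reached from `q` following a finite sequence of steps
(steps = letter together with direction). -/
def follow (M : DPTA Alpha Q) (q : Q) (steps : List (Alpha × Bool)) : Q :=
  steps.foldl (fun p s => M.next p s.1 s.2) q

/-- All states visited along a path (the starting state included). -/
def statesOn (M : DPTA Alpha Q) (q : Q) (steps : List (Alpha × Bool)) : List Q :=
  List.scanl (fun p s => M.next p s.1 s.2) q steps

/-- The largest rank of a state visited along a path. -/
def maxRankOn (M : DPTA Alpha Q) (q : Q) (steps : List (Alpha × Bool)) : ℕ :=
  ((M.statesOn q steps).map M.rank).foldr max 0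

/-- `steps` forms a loop at `q` (a path of positive length from `q` to `q`). -/
def IsLoop (M : DPTA Alpha Q) (q : Q) (steps : List (Alpha × Bool)) : Prop :=
  steps ≠ [] ∧ M.follow q steps = q

/-- `M` contains an `(i,k)`-flower: loops `lam i, …, lam k` at a common state `q`,
the largest rank on `lam j` has the parity of `j` and increases strictly with `j`. -/
def HasFlower (M : DPTA Alpha Q) (i k : ℕ) : Prop :=
  ∃ (q : Q) (lam : ℕ → List (Alpha × Bool)),
    (∀ j, i ≤ j → j ≤ k → M.IsLoop q (lam j) ∧ M.maxRankOn q (lam j) % 2 = j % 2) ∧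
    (∀ j, i ≤ j → j < k → M.maxRankOn q (lam j) < M.maxRankOn q (lam (j + 1)))

/-- `q` is reachable from the initial state. -/
def Reachable (M : DPTA Alpha Q) (q : Q) : Prop :=
  ∃ steps, M.follow M.init steps = q

/-- `q` is productive: it occurs in some accepting run of `M`. -/
def Productive (M : DPTA Alpha Q) (q : Q) : Prop :=
  ∃ t ∈ M.Lang, ∃ v, M.run t v = q

/-- The transition from `q` reading `s` is used in some accepting run of `M`. -/
def ProductiveTrans (M : DPTA Alpha Q) (q : Q) (s : Alpha) : Prop :=
  ∃ t ∈ M.Lang, ∃ v, M.run t v = q ∧ t v = s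

/-- `q` is all-rejecting: started from `q`, the automaton accepts no tree. -/
def AllRejecting (M : DPTA Alpha Q) (q : Q) : Prop :=
  ∀ t, ¬ M.AcceptsFrom q t

/-- `M` is normalized: every state is reachable, every state is productive except
possibly one all-rejecting state `⊥` with `δ(⊥,σ) = (⊥,⊥)`, and every transition is
productive or of the form `δ(q,σ) = (⊥,⊥)`. -/
def Normalized (M : DPTA Alpha Q) : Prop :=
  (∀ q, M.Reachable q) ∧
  ∃ bot : Option Q,
    (∀ q, some q ≠ bot → M.Productive q) ∧
    (∀ q, some q = bot → M.AllRejecting q ∧ ∀ s, M.delta q s = (q, q)) ∧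
    (∀ q s, M.ProductiveTrans q s ∨
      (some (M.delta q s).1 = bot ∧ some (M.delta q s).2 = bot))

end DPTA

/-- `Σ⁰₂` sets: countable unions of closed sets. -/
def IsSigma02 {X : Type} [TopologicalSpace X] (s : Set X) : Prop :=
  ∃ f : ℕ → Set X, (∀ n, IsClosed (f n)) ∧ s = ⋃ n, f n

/-- `Π⁰₂` sets: countable intersections of open sets. -/
def IsPi02 {X : Type} [TopologicalSpace X] (s : Set X) : Prop :=
  ∃ f : ℕ → Set X, (∀ n, IsOpen (f n)) ∧ s = ⋂ n, f n

/-- `Π⁰₃` sets: countable intersections of `Σ⁰₂` sets. -/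
def IsPi03 {X : Type} [TopologicalSpace X] (s : Set X) : Prop :=
  ∃ f : ℕ → Set X, (∀ n, IsSigma02 (f n)) ∧ s = ⋂ n, f n

/-- `Σ⁰₃` sets: countable unions of `Π⁰₂` sets. -/
def IsSigma03 {X : Type} [TopologicalSpace X] (s : Set X) : Prop :=
  ∃ f : ℕ → Set X, (∀ n, IsPi02 (f n)) ∧ s = ⋃ n, f n

/-!
Without a `(0,1)`-flower, the parity condition along a run is a Büchi condition. Let `R` be the
largest rank seen infinitely often. Any two states seen infinitely often lie on a common loop
through such states only, so the largest rank on that loop is `R` as soon as it passes through a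
state of rank `R`. Hence if `R` is even, a state of rank `R` recurs and is the largest rank on a
loop through it. Conversely, if a state `p` of even rank that is the largest on some loop recurs
while `R` is odd, this loop together with a loop at `p` through a state of rank `R` is a
`(0,1)`-flower. So `L(A)` is the intersection over `n` of the sets of trees each of whose paths
meets such a state beyond depth `n`, and each of these sets is open: by compactness of the space
of paths (König's lemma), one depth bound serves all paths.

Conversely, let `λ₀, λ₁` be loops at `q` whose largest ranks `a < b` are even and odd. Send
`x : ℕ → Bool` to the tree whose spine reads a path from the initial state to `q` followed by
`λ_{x 0} λ_{x 1} ⋯`, with accepting subtrees off the spine. These exist by normalization: the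
spine keeps returning to `q`, so it never enters the rejecting sink. The map is continuous, and
the tree is accepted iff `x` is eventually `false`. The eventually-false sequences form a dense
set with dense `G_δ` complement, so by Baire's theorem they do not form a `G_δ` set.
-/

open Topology

section Frequently

theorem eventually_frequently_eq {β : Type*} {f : ℕ → β} (hf : (Set.range f).Finite) :
    ∀ᶠ n in atTop, ∃ᶠ m in atTop, f m = f n := by
  have : ∀ᶠ n in atTop, ∀ b ∈ Set.range f, (¬∃ᶠ m in atTop, f m = b) → f n ≠ b := by
    refine hf.eventually_all.2 fun b _ => ?_
    by_cases hb : ∃ᶠ m in atTop, f m = b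
    · exact Eventually.of_forall fun _ h => (h hb).elim
    · exact (not_frequently.1 hb).mono fun _ hn _ => hn
  exact this.mono fun n hn => by_contra fun h => hn _ ⟨n, rfl⟩ h rfl

theorem exists_frequently_eq_of_frequently_mem {β : Type*} [Finite β] {f : ℕ → β} {S : Set β}
    (h : ∃ᶠ n in atTop, f n ∈ S) : ∃ b ∈ S, ∃ᶠ n in atTop, f n = b := by
  obtain ⟨b, hb⟩ := frequently_exists.1
    (h.mono fun n hn => (⟨f n, hn, rfl⟩ : ∃ b, b ∈ S ∧ f n = b))
  obtain ⟨-, hbS, -⟩ := hb.exists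
  exact ⟨b, hbS, hb.mono fun _ h => h.2⟩

theorem exists_frequently_eq_and_eventually_le {f : ℕ → ℕ} (hf : (Set.range f).Finite) :
    ∃ R, (∃ᶠ n in atTop, f n = R) ∧ ∀ᶠ n in atTop, f n ≤ R := by
  set S := {r | ∃ᶠ n in atTop, f n = r}
  have hS : ∀ᶠ n in atTop, f n ∈ S := eventually_frequently_eq hf
  have hSbdd : BddAbove S := (hf.subset fun r hr => hr.exists.imp fun _ => id).bddAbove
  have hSR : sSup S ∈ S := Nat.sSup_mem (let ⟨n, hn⟩ := hS.exists; ⟨f n, hn⟩) hSbdd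
  exact ⟨sSup S, hSR, hS.mono fun n hn => le_csSup hSbdd hn⟩

theorem sSup_setOf_frequently_eq {f : ℕ → ℕ} {R : ℕ} (hR : ∃ᶠ n in atTop, f n = R)
    (hle : ∀ᶠ n in atTop, f n ≤ R) : sSup {r | ∃ᶠ n in atTop, f n = r} = R := by
  have hub : ∀ r ∈ {r | ∃ᶠ n in atTop, f n = r}, r ≤ R := fun r hr => by
    obtain ⟨n, rfl, hn⟩ := (Frequently.and_eventually hr hle).exists
    exact hn
  exact le_antisymm (csSup_le ⟨R, hR⟩ hub) (le_csSup ⟨R, hub⟩ hR)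

end Frequently

section Cantor

theorem IsPi02.isGδ {X : Type} [TopologicalSpace X] {s : Set X} (h : IsPi02 s) : IsGδ s := by
  obtain ⟨f, hf, rfl⟩ := h
  exact IsGδ.iInter_of_isOpen hf

theorem dense_of_forall_ite_mem {s : Set (ℕ → Bool)} (c : Bool)
    (h : ∀ (y : ℕ → Bool) (N : ℕ), (fun i => if i < N then y i else c) ∈ s) : Dense s := by
  refine fun y => mem_closure_of_tendsto (b := atTop) (tendsto_pi_nhds.2 fun i => ?_)
    (Eventually.of_forall (h y))
  exact tendsto_const_nhds.congr' ((eventually_gt_atTop i).mono fun N hN => (if_pos hN).symm)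

theorem not_isGδ_setOf_eventually_eq_false :
    ¬ IsGδ {x : ℕ → Bool | ∀ᶠ k in atTop, x k = false} := by
  intro hG
  have hG' : IsGδ {x : ℕ → Bool | ∃ᶠ k in atTop, x k = true} := by
    have : {x : ℕ → Bool | ∃ᶠ k in atTop, x k = true} =
        ⋂ N, ⋃ k, ⋃ (_ : N ≤ k), (fun x : ℕ → Bool => x k) ⁻¹' {true} := by
      ext x
      simp [frequently_atTop]
    rw [this]
    exact IsGδ.iInter_of_isOpen fun N => isOpen_iUnion fun k => isOpen_iUnion fun _ =>
      (isOpen_discrete _).preimage (continuous_apply k)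
  have hd : Dense {x : ℕ → Bool | ∀ᶠ k in atTop, x k = false} :=
    dense_of_forall_ite_mem false fun y N =>
      eventually_atTop.2 ⟨N, fun k hk => if_neg (by omega)⟩
  have hd' : Dense {x : ℕ → Bool | ∃ᶠ k in atTop, x k = true} :=
    dense_of_forall_ite_mem true fun y N =>
      frequently_atTop.2 fun k => ⟨max k N, le_max_left _ _, if_neg (by omega)⟩
  obtain ⟨x, hx, hx'⟩ := (hd.inter_of_Gδ hG hG' hd').nonempty
  obtain ⟨k, h, h'⟩ := (hx'.and_eventually hx).exists
  exact Bool.noConfusion (h.symm.trans h')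

theorem continuous_of_forall_cylinder {X : Type*} [TopologicalSpace X] {f : (ℕ → Bool) → X}
    (h : ∀ x, ∃ n, ∀ y ∈ PiNat.cylinder x n, f y = f x) : Continuous f :=
  IsLocallyConstant.continuous <| (IsLocallyConstant.iff_eventually_eq f).2 fun x =>
    let ⟨n, hn⟩ := h x
    Filter.mem_of_superset ((PiNat.isOpen_cylinder _ x n).mem_nhds (PiNat.self_mem_cylinder x n)) hn

end Cantor

section Concat

variable {β : Type*}

def concatWord (b : ℕ → List β) (hb : ∀ k, b k ≠ []) (n : ℕ) : β :=
  if h : n < (b 0).length then (b 0)[n]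
  else concatWord (fun k => b (k + 1)) (fun k => hb (k + 1)) (n - (b 0).length)
termination_by n
decreasing_by have := List.length_pos_iff.2 (hb 0); omega

def blockStart (b : ℕ → List β) (k : ℕ) : ℕ :=
  ∑ i ∈ Finset.range k, (b i).length

variable {b : ℕ → List β} {hb : ∀ k, b k ≠ []}

theorem blockStart_succ (b : ℕ → List β) (k : ℕ) :
    blockStart b (k + 1) = blockStart b k + (b k).length :=
  Finset.sum_range_succ ..

theorem blockStart_strictMono (hb : ∀ k, b k ≠ []) : StrictMono (blockStart b) :=
  strictMono_nat_of_lt_succ fun k => by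
    rw [blockStart_succ]
    have := List.length_pos_iff.2 (hb k)
    omega

theorem exists_blockStart_le_lt (hb : ∀ k, b k ≠ []) (n : ℕ) :
    ∃ k, blockStart b k ≤ n ∧ n < blockStart b (k + 1) := by
  classical
  have hex : ∃ k, n < blockStart b (k + 1) :=
    ⟨n, (Nat.lt_succ_self n).trans_le ((blockStart_strictMono hb).id_le _)⟩
  refine ⟨Nat.find hex, ?_, Nat.find_spec hex⟩
  rcases h : Nat.find hex with _ | k
  · simp [blockStart]
  · exact not_lt.1 (Nat.find_min hex (h ▸ Nat.lt_succ_self k))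

theorem concatWord_of_lt {n : ℕ} (h : n < (b 0).length) : concatWord b hb n = (b 0)[n] := by
  rw [concatWord, dif_pos h]

theorem concatWord_length_add (n : ℕ) :
    concatWord b hb ((b 0).length + n) =
      concatWord (fun k => b (k + 1)) (fun k => hb (k + 1)) n := by
  rw [concatWord, dif_neg (by omega), Nat.add_sub_cancel_left]

theorem concatWord_blockStart_add (k n : ℕ) :
    concatWord b hb (blockStart b k + n) =
      concatWord (fun i => b (i + k)) (fun i => hb (i + k)) n := by
  induction k generalizing b with
  | zero => simp [blockStart]
  | succ k ih =>
    rw [blockStart, Finset.sum_range_succ', add_comm _ (b 0).length, add_assoc,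
      concatWord_length_add]
    exact ih

theorem ofFn_concatWord_blockStart_add (k : ℕ) :
    (List.ofFn fun i : Fin (b k).length => concatWord b hb (blockStart b k + i)) = b k := by
  refine List.ext_getElem (by simp) fun i hi _ => ?_
  simp only [List.getElem_ofFn, concatWord_blockStart_add]
  rw [concatWord_of_lt (by simpa using hi)]
  simp

theorem concatWord_congr {b' : ℕ → List β} {hb' : ∀ k, b' k ≠ []} {n : ℕ}
    (h : ∀ i ≤ n, b i = b' i) : concatWord b hb n = concatWord b' hb' n := by
  induction n using Nat.strong_induction_on generalizing b b' with
  | _ n ih =>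
    rw [concatWord]
    conv_rhs => rw [concatWord]
    rw [h 0 (Nat.zero_le n)]
    split_ifs with hn
    · rfl
    · have := List.length_pos_iff.2 (hb' 0)
      exact ih _ (by omega) fun i hi => h (i + 1) (by omega)

end Concat

def codingBlocks {β : Type*} (u l₀ l₁ : List β) (x : ℕ → Bool) : ℕ → List β
  | 0 => u
  | k + 1 => if x k then l₁ else l₀

namespace DPTA

variable {Alpha Q : Type}

section ParityAccept

theorem parityAccept_iff_even {f : ℕ → ℕ} {R : ℕ} (hR : ∃ᶠ n in atTop, f n = R)
    (hle : ∀ᶠ n in atTop, f n ≤ R) : ParityAccept f ↔ Even R := by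
  rw [ParityAccept, sSup_setOf_frequently_eq hR hle]

theorem parityAccept_comp_add (f : ℕ → ℕ) (k : ℕ) :
    ParityAccept (fun n => f (n + k)) ↔ ParityAccept f := by
  have h : ∀ r, (∃ᶠ n in atTop, f (n + k) = r) ↔ ∃ᶠ n in atTop, f n = r := fun r => by
    conv_rhs => rw [← map_add_atTop_eq_nat k]
    rw [frequently_map]
  simp only [ParityAccept, h]

theorem parityAccept_iff_of_exists_eq_of_eventually_le {f g : ℕ → ℕ} (hf : (Set.range f).Finite)
    (hg : ∀ k, ∃ n ≥ k, f n = g k) (hfg : ∀ K, ∀ᶠ n in atTop, ∃ k ≥ K, f n ≤ g k) :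
    ParityAccept f ↔ ParityAccept g := by
  have hgf : Set.range g ⊆ Set.range f := by
    rintro _ ⟨k, rfl⟩
    obtain ⟨n, -, hn⟩ := hg k
    exact ⟨n, hn⟩
  obtain ⟨R, hR, hle⟩ := exists_frequently_eq_and_eventually_le (hf.subset hgf)
  obtain ⟨K, hK⟩ := eventually_atTop.1 hle
  rw [parityAccept_iff_even hR hle, parityAccept_iff_even (f := f) (R := R)]
  · refine frequently_atTop.2 fun N => ?_
    obtain ⟨k, hkN, hk⟩ := frequently_atTop.1 hR N
    obtain ⟨n, hnk, hn⟩ := hg k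
    exact ⟨n, hkN.trans hnk, hn.trans hk⟩
  · exact (hfg K).mono fun n ⟨k, hkK, hk⟩ => hk.trans (hK k hkK)

theorem parityAccept_ite_iff {a b : ℕ} (ha : Even a) (hb : Odd b) (hab : a < b) (x : ℕ → Bool) :
    ParityAccept (fun k => if x k then b else a) ↔ ∀ᶠ k in atTop, x k = false := by
  by_cases h : ∃ᶠ k in atTop, x k = true
  · rw [parityAccept_iff_even (R := b) (h.mono fun k hk => by simp [hk])
      (Eventually.of_forall fun k => by split <;> omega)]
    refine iff_of_false (Nat.not_even_iff_odd.2 hb) fun h' => ?_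
    obtain ⟨k, hk, hk'⟩ := (h.and_eventually h').exists
    exact Bool.noConfusion (hk.symm.trans hk')
  · have h' : ∀ᶠ k in atTop, x k = false := by simpa using not_frequently.1 h
    rw [parityAccept_iff_even (R := a) (h'.frequently.mono fun k hk => by simp [hk])
      (h'.mono fun k hk => by simp [hk])]
    exact iff_of_true ha h'

end ParityAccept

section Words

variable (M : DPTA Alpha Q)

def stateSeq (q : Q) (w : ℕ → Alpha × Bool) (n : ℕ) : Q :=
  M.follow q (List.ofFn fun i : Fin n => w i)

theorem follow_append (q : Q) (l₁ l₂ : List (Alpha × Bool)) :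
    M.follow q (l₁ ++ l₂) = M.follow (M.follow q l₁) l₂ :=
  List.foldl_append

@[simp] theorem stateSeq_zero (q : Q) (w : ℕ → Alpha × Bool) : M.stateSeq q w 0 = q := rfl

theorem stateSeq_succ (q : Q) (w : ℕ → Alpha × Bool) (n : ℕ) :
    M.stateSeq q w (n + 1) = M.stateSeq (M.next q (w 0).1 (w 0).2) (fun i => w (i + 1)) n := by
  simp [stateSeq, List.ofFn_succ, follow]

theorem stateSeq_add (q : Q) (w : ℕ → Alpha × Bool) (m k : ℕ) :
    M.stateSeq q w (m + k) = M.stateSeq (M.stateSeq q w m) (fun i => w (m + i)) k := by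
  simp [stateSeq, List.ofFn_add, follow_append]

theorem stateSeq_succ' (q : Q) (w : ℕ → Alpha × Bool) (n : ℕ) :
    M.stateSeq q w (n + 1) = M.next (M.stateSeq q w n) (w n).1 (w n).2 := by
  rw [stateSeq_add]
  simp [stateSeq, follow]

theorem statesOn_cons (q : Q) (s : Alpha × Bool) (l : List (Alpha × Bool)) :
    M.statesOn q (s :: l) = q :: M.statesOn (M.next q s.1 s.2) l := by
  simp [statesOn, List.scanl_cons]

theorem mem_statesOn_ofFn {q p : Q} {w : ℕ → Alpha × Bool} {k : ℕ} :
    p ∈ M.statesOn q (List.ofFn fun i : Fin k => w i) ↔ ∃ i ≤ k, M.stateSeq q w i = p := by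
  induction k generalizing q w with
  | zero => simp [statesOn, eq_comm]
  | succ k ih =>
    have ih' := @ih (M.next q (w 0).1 (w 0).2) (fun i => w (i + 1))
    simp only [List.ofFn_succ, Fin.val_zero, Fin.val_succ, statesOn_cons, List.mem_cons, ih']
    constructor
    · rintro (rfl | ⟨i, hi, rfl⟩)
      · exact ⟨0, by omega, rfl⟩
      · exact ⟨i + 1, by omega, stateSeq_succ ..⟩
    · rintro ⟨_ | i, hi, rfl⟩
      · exact Or.inl rfl
      · exact Or.inr ⟨i, by omega, (stateSeq_succ ..).symm⟩

theorem rank_le_maxRankOn {q p : Q} {l : List (Alpha × Bool)} (h : p ∈ M.statesOn q l) :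
    M.rank p ≤ M.maxRankOn q l :=
  List.le_max_of_le (List.mem_map_of_mem h) le_rfl

theorem maxRankOn_le {q : Q} {l : List (Alpha × Bool)} {R : ℕ}
    (h : ∀ p ∈ M.statesOn q l, M.rank p ≤ R) : M.maxRankOn q l ≤ R :=
  List.max_le_of_forall_le _ _ (by simpa using h)

theorem exists_rank_eq_maxRankOn (q : Q) (l : List (Alpha × Bool)) :
    ∃ p ∈ M.statesOn q l, M.rank p = M.maxRankOn q l := by
  have hne : (M.statesOn q l).map M.rank ≠ [] := by cases l <;> simp [statesOn]
  simpa [maxRankOn] using List.maximum_mem (List.foldr_max_of_ne_nil hne).symm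

end Words

section Trees

variable (M : DPTA Alpha Q)

theorem pref_succ (π : ℕ → Bool) (n : ℕ) :
    pref π (n + 1) = π 0 :: pref (fun i => π (i + 1)) n := by
  simp [pref, List.ofFn_succ]

theorem pref_congr {π π' : ℕ → Bool} {n : ℕ} (h : ∀ i < n, π i = π' i) : pref π n = pref π' n :=
  List.ofFn_inj.2 (funext fun i => h i i.isLt)

@[simp] theorem length_pref (π : ℕ → Bool) (n : ℕ) : (pref π n).length = n := by
  simp [pref]

def pathWord (t : List Bool → Alpha) (π : ℕ → Bool) (n : ℕ) : Alpha × Bool :=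
  (t (pref π n), π n)

theorem runFrom_pref (q : Q) (t : List Bool → Alpha) (π : ℕ → Bool) (n : ℕ) :
    M.runFrom q t (pref π n) = M.stateSeq q (pathWord t π) n := by
  induction n generalizing q t π with
  | zero => rfl
  | succ n ih =>
    rw [pref_succ, runFrom, ih, stateSeq_succ]
    congr 1
    funext i
    simp [pathWord, pref_succ]

theorem runFrom_congr {q : Q} {t t' : List Bool → Alpha} {v : List Bool}
    (h : ∀ u : List Bool, u.length < v.length → t u = t' u) :
    M.runFrom q t v = M.runFrom q t' v := by
  induction v generalizing q t t' with
  | nil => rfl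
  | cons d v ih =>
    rw [runFrom, runFrom, h [] (by simp)]
    exact ih fun u hu => h (d :: u) (by simpa using hu)

theorem parityAccept_runFrom_iff_child (q : Q) (t : List Bool → Alpha) (π : ℕ → Bool) :
    ParityAccept (fun n => M.rank (M.runFrom q t (pref π n))) ↔
      ParityAccept (fun n => M.rank (M.runFrom (M.next q (t []) (π 0)) (fun u => t (π 0 :: u))
        (pref (fun i => π (i + 1)) n))) := by
  rw [← parityAccept_comp_add _ 1]
  simp only [pref_succ, runFrom]

theorem acceptsFrom_iff_forall_child {q : Q} {t : List Bool → Alpha} :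
    M.AcceptsFrom q t ↔ ∀ d, M.AcceptsFrom (M.next q (t []) d) (fun u => t (d :: u)) :=
  ⟨fun h d π => (M.parityAccept_runFrom_iff_child q t (Stream'.cons d π)).1 (h _),
    fun h π => (M.parityAccept_runFrom_iff_child q t π).2 (h (π 0) _)⟩

theorem AcceptsFrom.subtree {q : Q} {t : List Bool → Alpha} (h : M.AcceptsFrom q t)
    (v : List Bool) : M.AcceptsFrom (M.runFrom q t v) (fun u => t (v ++ u)) := by
  induction v generalizing q t with
  | nil => exact h
  | cons d v ih => exact ih ((M.acceptsFrom_iff_forall_child.1 h) d)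

theorem ProductiveTrans.exists_acceptsFrom_next {p : Q} {s : Alpha} (h : M.ProductiveTrans p s)
    (d : Bool) : ∃ t, M.AcceptsFrom (M.next p s d) t := by
  obtain ⟨t, ht, v, rfl, rfl⟩ := h
  have := M.acceptsFrom_iff_forall_child.1 (AcceptsFrom.subtree M ht v) d
  simp only [List.append_nil] at this
  exact ⟨_, this⟩

end Trees

section Buchi

variable (M : DPTA Alpha Q)

theorem hasFlower_zero_one_iff : M.HasFlower 0 1 ↔ ∃ q l₀ l₁, M.IsLoop q l₀ ∧ M.IsLoop q l₁ ∧
    Even (M.maxRankOn q l₀) ∧ Odd (M.maxRankOn q l₁) ∧ M.maxRankOn q l₀ < M.maxRankOn q l₁ := by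
  constructor
  · rintro ⟨q, lam, hlam, hlt⟩
    obtain ⟨hl₀, he⟩ := hlam 0 le_rfl zero_le_one
    obtain ⟨hl₁, ho⟩ := hlam 1 zero_le_one le_rfl
    exact ⟨q, lam 0, lam 1, hl₀, hl₁, Nat.even_iff.2 he, Nat.odd_iff.2 ho, hlt 0 le_rfl zero_lt_one⟩
  · rintro ⟨q, l₀, l₁, hl₀, hl₁, he, ho, hlt⟩
    refine ⟨q, fun j => if j = 0 then l₀ else l₁, fun j _ hj => ?_, fun j _ hj => ?_⟩
    · interval_cases j
      exacts [⟨hl₀, Nat.even_iff.1 he⟩, ⟨hl₁, Nat.odd_iff.1 ho⟩]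
    · obtain rfl : j = 0 := by omega
      exact hlt

def buchiSet : Set Q :=
  {p | Even (M.rank p) ∧ ∃ l, M.IsLoop p l ∧ M.maxRankOn p l = M.rank p}

theorem exists_loop_of_frequently [Finite Q] {q p p' : Q} {w : ℕ → Alpha × Bool}
    (hp : ∃ᶠ n in atTop, M.stateSeq q w n = p) (hp' : ∃ᶠ n in atTop, M.stateSeq q w n = p') :
    ∃ l, M.IsLoop p l ∧ p' ∈ M.statesOn p l ∧
      ∀ r ∈ M.statesOn p l, ∃ᶠ n in atTop, M.stateSeq q w n = r := by
  obtain ⟨N, hN⟩ :=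
    eventually_atTop.1 (eventually_frequently_eq (Set.toFinite (Set.range (M.stateSeq q w))))
  obtain ⟨n₁, hn₁N, rfl⟩ := frequently_atTop.1 hp N
  obtain ⟨n', hn'₁, rfl⟩ := frequently_atTop.1 hp' n₁
  obtain ⟨n₂, hn₂', hn₂⟩ := frequently_atTop.1 hp (n' + 1)
  have hseg : ∀ i, M.stateSeq (M.stateSeq q w n₁) (fun j => w (n₁ + j)) i =
      M.stateSeq q w (n₁ + i) := fun i => (M.stateSeq_add q w n₁ i).symm
  refine ⟨List.ofFn fun i : Fin (n₂ - n₁) => w (n₁ + i), ⟨?_, ?_⟩, ?_, fun r hr => ?_⟩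
  · simp only [ne_eq, List.ofFn_eq_nil_iff]
    omega
  · show M.stateSeq (M.stateSeq q w n₁) (fun j => w (n₁ + j)) (n₂ - n₁) = _
    rw [hseg, Nat.add_sub_cancel' (by omega), hn₂]
  · exact (M.mem_statesOn_ofFn (w := fun j => w (n₁ + j))).2
      ⟨n' - n₁, by omega, by rw [hseg, Nat.add_sub_cancel' hn'₁]⟩
  · obtain ⟨i, -, rfl⟩ := (M.mem_statesOn_ofFn (w := fun j => w (n₁ + j))).1 hr
    rw [hseg]
    exact hN _ (by omega)

theorem parityAccept_iff_frequently_mem_buchiSet [Finite Q] (hM : ¬ M.HasFlower 0 1) (q : Q)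
    (w : ℕ → Alpha × Bool) :
    ParityAccept (fun n => M.rank (M.stateSeq q w n)) ↔
      ∃ᶠ n in atTop, M.stateSeq q w n ∈ M.buchiSet := by
  obtain ⟨R, hR, hle⟩ := exists_frequently_eq_and_eventually_le
    (f := fun n => M.rank (M.stateSeq q w n))
    ((Set.finite_range M.rank).subset (Set.range_comp_subset_range (M.stateSeq q w) M.rank))
  rw [parityAccept_iff_even hR hle]
  have hrank : ∀ r, (∃ᶠ n in atTop, M.stateSeq q w n = r) → M.rank r ≤ R := fun r hr => by
    obtain ⟨n, rfl, hn⟩ := (hr.and_eventually hle).exists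
    exact hn
  obtain ⟨pR, hpRR, hpR⟩ := exists_frequently_eq_of_frequently_mem
    (f := M.stateSeq q w) (S := {p | M.rank p = R}) hR
  have hmax : ∀ {p l}, pR ∈ M.statesOn p l →
      (∀ r ∈ M.statesOn p l, ∃ᶠ n in atTop, M.stateSeq q w n = r) → M.maxRankOn p l = R :=
    fun hmem hall => le_antisymm (M.maxRankOn_le fun r hr => hrank r (hall r hr))
      (hpRR ▸ M.rank_le_maxRankOn hmem)
  constructor
  · intro hRe
    obtain ⟨l, hl, hmem, hall⟩ := M.exists_loop_of_frequently hpR hpR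
    have hF : pR ∈ M.buchiSet := ⟨hpRR ▸ hRe, l, hl, (hmax hmem hall).trans hpRR.symm⟩
    exact hpR.mono fun n hn => hn ▸ hF
  · intro hF
    obtain ⟨p, ⟨hpe, l₀, hl₀, hl₀R⟩, hp⟩ := exists_frequently_eq_of_frequently_mem hF
    obtain ⟨l₁, hl₁, hmem, hall⟩ := M.exists_loop_of_frequently hp hpR
    by_contra hRo
    have hlt : M.rank p < R := lt_of_le_of_ne (hrank p hp) fun h => hRo (h ▸ hpe)
    exact hM ((M.hasFlower_zero_one_iff).2 ⟨p, l₀, l₁, hl₀, hl₁, hl₀R ▸ hpe,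
      (hmax hmem hall) ▸ Nat.not_even_iff_odd.1 hRo, by rwa [hl₀R, hmax hmem hall]⟩)

end Buchi

section Pi02

variable (M : DPTA Alpha Q)

theorem exists_bound_of_forall_exists_pref {P : List Bool → Prop}
    (h : ∀ π : ℕ → Bool, ∃ m, P (pref π m)) : ∃ B, ∀ π : ℕ → Bool, ∃ m ≤ B, P (pref π m) := by
  choose m hm using h
  obtain ⟨s, -, hs⟩ := isCompact_univ.elim_nhds_subcover (fun π => PiNat.cylinder π (m π))
    fun π _ => (PiNat.isOpen_cylinder _ π (m π)).mem_nhds (PiNat.self_mem_cylinder π _)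
  refine ⟨s.sup m, fun π => ?_⟩
  obtain ⟨σ, hσ, hπσ⟩ := Set.mem_iUnion₂.1 (hs (Set.mem_univ π))
  exact ⟨m σ, Finset.le_sup hσ, pref_congr (PiNat.mem_cylinder_iff.1 hπσ) ▸ hm σ⟩

variable [TopologicalSpace Alpha] [DiscreteTopology Alpha]

theorem isOpen_setOf_forall_exists_runFrom_mem (q : Q) (F : Set Q) (n : ℕ) :
    IsOpen {t : List Bool → Alpha | ∀ π, ∃ m, n ≤ m ∧ M.runFrom q t (pref π m) ∈ F} := by
  refine isOpen_iff_mem_nhds.2 fun t ht => ?_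
  obtain ⟨B, hB⟩ := exists_bound_of_forall_exists_pref
    (P := fun v => n ≤ v.length ∧ M.runFrom q t v ∈ F)
    fun π => (ht π).imp fun m hm => by rwa [length_pref]
  have hnear : ∀ᶠ t' in 𝓝 t, ∀ u ∈ {u : List Bool | u.length < B}, t' u = t u :=
    (List.finite_length_lt Bool B).eventually_all.2 fun u _ =>
      (continuous_apply u).continuousAt.eventually_mem
        (mem_nhds_discrete.2 (Set.mem_singleton (t u)))
  filter_upwards [hnear] with t' ht' π
  obtain ⟨m, hmB, hnm, hF⟩ := hB π
  refine ⟨m, by simpa using hnm, ?_⟩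
  rwa [M.runFrom_congr fun u hu => ht' u (by simp at hu; omega)]

theorem isPi02_lang_of_not_hasFlower [Finite Q] (hM : ¬ M.HasFlower 0 1) : IsPi02 M.Lang := by
  refine ⟨fun n => {t | ∀ π, ∃ m, n ≤ m ∧ M.runFrom M.init t (pref π m) ∈ M.buchiSet},
    fun n => M.isOpen_setOf_forall_exists_runFrom_mem _ _ n, ?_⟩
  ext t
  simp only [Lang, AcceptsFrom, Set.mem_ofPred_eq, Set.mem_iInter, runFrom_pref,
    M.parityAccept_iff_frequently_mem_buchiSet hM, frequently_atTop]
  exact forall_comm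

end Pi02

section Spine

variable [Nonempty Alpha]

/-- The run from `q` reads `w` along the path of directions `(w i).2`. Each subtree off that path
is `Classical.epsilon`'s choice of a tree accepted from the state reached there (junk if there is
none). -/
noncomputable def spineTree (M : DPTA Alpha Q) : Q → (ℕ → Alpha × Bool) → List Bool → Alpha
  | _, w, [] => (w 0).1
  | q, w, d :: v =>
    if d = (w 0).2 then spineTree M (M.next q (w 0).1 (w 0).2) (fun i => w (i + 1)) v
    else Classical.epsilon (M.AcceptsFrom (M.next q (w 0).1 d)) v

variable (M : DPTA Alpha Q) {q : Q} {w : ℕ → Alpha × Bool}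

@[simp] theorem spineTree_nil : M.spineTree q w [] = (w 0).1 := rfl

theorem spineTree_cons_self (v : List Bool) :
    M.spineTree q w ((w 0).2 :: v) =
      M.spineTree (M.next q (w 0).1 (w 0).2) (fun i => w (i + 1)) v := by
  simp [spineTree]

theorem spineTree_cons_of_ne {d : Bool} (h : d ≠ (w 0).2) (v : List Bool) :
    M.spineTree q w (d :: v) = Classical.epsilon (M.AcceptsFrom (M.next q (w 0).1 d)) v := by
  simp [spineTree, h]

theorem runFrom_spineTree (q : Q) (w : ℕ → Alpha × Bool) (n : ℕ) :
    M.runFrom q (M.spineTree q w) (pref (fun i => (w i).2) n) = M.stateSeq q w n := by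
  induction n generalizing q w with
  | zero => rfl
  | succ n ih =>
    rw [pref_succ, runFrom, stateSeq_succ, spineTree_nil]
    simp only [spineTree_cons_self]
    exact ih _ _

theorem parityAccept_spineTree_of_ne_zero {π : ℕ → Bool} (h₀ : π 0 ≠ (w 0).2)
    (h : ∃ t, M.AcceptsFrom (M.next q (w 0).1 (π 0)) t) :
    ParityAccept (fun n => M.rank (M.runFrom q (M.spineTree q w) (pref π n))) := by
  rw [parityAccept_runFrom_iff_child]
  simp only [spineTree_nil, M.spineTree_cons_of_ne h₀]
  exact Classical.epsilon_spec h _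

theorem parityAccept_spineTree_of_ne
    (hoff : ∀ k, ∀ d ≠ (w k).2, ∃ t, M.AcceptsFrom (M.next (M.stateSeq q w k) (w k).1 d) t)
    {π : ℕ → Bool} {k : ℕ} (hk : π k ≠ (w k).2) :
    ParityAccept (fun n => M.rank (M.runFrom q (M.spineTree q w) (pref π n))) := by
  induction k generalizing q w π with
  | zero => exact M.parityAccept_spineTree_of_ne_zero hk (hoff 0 _ hk)
  | succ k ih =>
    by_cases h₀ : π 0 = (w 0).2
    · rw [parityAccept_runFrom_iff_child]
      simp only [spineTree_nil, h₀, spineTree_cons_self]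
      refine ih (fun k d hd => ?_) hk
      simpa only [stateSeq_succ] using hoff (k + 1) d hd
    · exact M.parityAccept_spineTree_of_ne_zero h₀ (hoff 0 _ h₀)

theorem acceptsFrom_spineTree_iff
    (hoff : ∀ k, ∀ d ≠ (w k).2, ∃ t, M.AcceptsFrom (M.next (M.stateSeq q w k) (w k).1 d) t) :
    M.AcceptsFrom q (M.spineTree q w) ↔ ParityAccept (fun n => M.rank (M.stateSeq q w n)) := by
  refine ⟨fun h => by simpa only [runFrom_spineTree] using h fun i => (w i).2, fun h π => ?_⟩
  by_cases hπ : ∀ i, π i = (w i).2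
  · simpa only [funext hπ, runFrom_spineTree] using h
  · obtain ⟨k, hk⟩ := not_forall.1 hπ
    exact M.parityAccept_spineTree_of_ne hoff hk

theorem spineTree_congr {w' : ℕ → Alpha × Bool} {v : List Bool}
    (h : ∀ i ≤ v.length, w i = w' i) : M.spineTree q w v = M.spineTree q w' v := by
  induction v generalizing q w w' with
  | nil => simp [h 0 le_rfl]
  | cons d v ih =>
    simp only [spineTree, h 0 (Nat.zero_le _)]
    split_ifs
    · exact ih fun i hi => h (i + 1) (by simpa using hi)
    · rfl

end Spine

section ConcatRun

variable (M : DPTA Alpha Q) {b : ℕ → List (Alpha × Bool)} {hb : ∀ k, b k ≠ []}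

theorem stateSeq_blockStart_succ (q : Q) (k : ℕ) :
    M.stateSeq q (concatWord b hb) (blockStart b (k + 1)) =
      M.follow (M.stateSeq q (concatWord b hb) (blockStart b k)) (b k) := by
  rw [blockStart_succ, stateSeq_add]
  conv_rhs => rw [← ofFn_concatWord_blockStart_add (hb := hb) k]
  rfl

theorem mem_statesOn_block {q p : Q} {k : ℕ} :
    p ∈ M.statesOn (M.stateSeq q (concatWord b hb) (blockStart b k)) (b k) ↔
      ∃ i ≤ (b k).length, M.stateSeq q (concatWord b hb) (blockStart b k + i) = p := by
  conv_lhs => rw [← ofFn_concatWord_blockStart_add (hb := hb) k]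
  rw [mem_statesOn_ofFn (w := fun i => concatWord b hb (blockStart b k + i))]
  simp only [stateSeq_add]

theorem parityAccept_stateSeq_concatWord_iff [Finite Q] (q : Q) :
    ParityAccept (fun n => M.rank (M.stateSeq q (concatWord b hb) n)) ↔
      ParityAccept fun k =>
        M.maxRankOn (M.stateSeq q (concatWord b hb) (blockStart b k)) (b k) := by
  refine parityAccept_iff_of_exists_eq_of_eventually_le
    ((Set.finite_range M.rank).subset (Set.range_comp_subset_range _ M.rank))
    (fun k => ?_) (fun K => eventually_atTop.2 ⟨blockStart b K, fun n hn => ?_⟩)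
  · obtain ⟨p, hp, hpmax⟩ := M.exists_rank_eq_maxRankOn _ (b k)
    obtain ⟨i, -, rfl⟩ := M.mem_statesOn_block.1 hp
    exact ⟨blockStart b k + i, ((blockStart_strictMono hb).id_le k).trans (Nat.le_add_right _ _),
      hpmax⟩
  · obtain ⟨k, hk, hk'⟩ := exists_blockStart_le_lt hb n
    refine ⟨k, Nat.lt_succ_iff.1 ((blockStart_strictMono hb).lt_iff_lt.1 (hn.trans_lt hk')),
      M.rank_le_maxRankOn (M.mem_statesOn_block.2 ⟨n - blockStart b k, ?_, ?_⟩)⟩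
    · rw [blockStart_succ] at hk'
      omega
    · rw [Nat.add_sub_cancel' hk]

end ConcatRun

section Normalized

variable (M : DPTA Alpha Q) {b : Q}

theorem next_eq_self_of_forall_delta_eq (hb : ∀ s, M.delta b s = (b, b)) (s : Alpha) (d : Bool) :
    M.next b s d = b := by
  cases d <;> simp [next, hb]

theorem follow_eq_self_of_forall_delta_eq (hb : ∀ s, M.delta b s = (b, b))
    (l : List (Alpha × Bool)) : M.follow b l = b := by
  induction l with
  | nil => rfl
  | cons s l ih =>
    show M.follow (M.next b s.1 s.2) l = b
    rw [M.next_eq_self_of_forall_delta_eq hb, ih]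

theorem maxRankOn_eq_rank_of_forall_delta_eq (hb : ∀ s, M.delta b s = (b, b))
    (l : List (Alpha × Bool)) : M.maxRankOn b l = M.rank b := by
  induction l with
  | nil => simp [maxRankOn, statesOn]
  | cons s l ih =>
    simp only [maxRankOn, statesOn_cons, M.next_eq_self_of_forall_delta_eq hb] at ih ⊢
    rw [List.map_cons, List.foldr_cons, ih, max_self]

theorem Normalized.productiveTrans_of_follow_next_eq (hM : M.Normalized) {p q : Q} {s : Alpha}
    {d : Bool} {l : List (Alpha × Bool)} (hq : ¬ ∀ s, M.delta q s = (q, q))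
    (h : M.follow (M.next p s d) l = q) : M.ProductiveTrans p s := by
  obtain ⟨-, bot, -, hbot, htrans⟩ := hM
  refine (htrans p s).resolve_right fun ⟨h₁, h₂⟩ => hq ?_
  have hsink := (hbot _ h₁).2
  have hnext : M.next p s d = (M.delta p s).1 := by
    cases d
    · rfl
    · exact Option.some.inj (h₂.trans h₁.symm)
  rw [hnext, M.follow_eq_self_of_forall_delta_eq hsink] at h
  exact h ▸ hsink

end Normalized

section Hardness

variable (M : DPTA Alpha Q)

theorem stateSeq_codingWord_blockStart_succ {p q : Q} {u l₀ l₁ : List (Alpha × Bool)}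
    {x : ℕ → Bool} (hb : ∀ k, codingBlocks u l₀ l₁ x k ≠ []) (hu : M.follow p u = q)
    (hl₀ : M.follow q l₀ = q) (hl₁ : M.follow q l₁ = q) (k : ℕ) :
    M.stateSeq p (concatWord _ hb) (blockStart (codingBlocks u l₀ l₁ x) (k + 1)) = q := by
  induction k with
  | zero =>
    rw [stateSeq_blockStart_succ]
    simpa [codingBlocks, blockStart] using hu
  | succ k ih =>
    rw [stateSeq_blockStart_succ, ih, codingBlocks]
    split <;> assumption

theorem spineTree_codingWord_mem_lang_iff [Nonempty Alpha] [Finite Q] (hM : M.Normalized) {q : Q}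
    {u l₀ l₁ : List (Alpha × Bool)} (hl₀ : M.follow q l₀ = q) (hl₁ : M.follow q l₁ = q)
    (he : Even (M.maxRankOn q l₀)) (ho : Odd (M.maxRankOn q l₁))
    (hlt : M.maxRankOn q l₀ < M.maxRankOn q l₁) (hu : M.follow M.init u = q) {x : ℕ → Bool}
    (hb : ∀ k, codingBlocks (u ++ l₀) l₀ l₁ x k ≠ []) :
    M.spineTree M.init (concatWord _ hb) ∈ M.Lang ↔ ∀ᶠ k in atTop, x k = false := by
  have hq : ¬ ∀ s, M.delta q s = (q, q) := fun h => by
    rw [M.maxRankOn_eq_rank_of_forall_delta_eq h] at he ho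
    exact Nat.not_even_iff_odd.2 ho he
  have hstart := M.stateSeq_codingWord_blockStart_succ hb (by rw [follow_append, hu, hl₀]) hl₀ hl₁
  -- every transition on the spine leads to a later visit of `q`, so it is productive
  have hoff : ∀ k, ∀ d ≠ (concatWord _ hb k).2, ∃ t, M.AcceptsFrom
      (M.next (M.stateSeq M.init (concatWord _ hb) k) (concatWord _ hb k).1 d) t := by
    intro k d _
    have hk : k + 1 ≤ blockStart (codingBlocks (u ++ l₀) l₀ l₁ x) (k + 1) :=
      (blockStart_strictMono hb).id_le (k + 1)
    have hreach := M.stateSeq_add M.init (concatWord _ hb) (k + 1)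
      (blockStart (codingBlocks (u ++ l₀) l₀ l₁ x) (k + 1) - (k + 1))
    rw [Nat.add_sub_cancel' hk, hstart k, stateSeq_succ'] at hreach
    exact (hM.productiveTrans_of_follow_next_eq M hq hreach.symm).exists_acceptsFrom_next M d
  rw [Lang, Set.mem_ofPred_eq, M.acceptsFrom_spineTree_iff hoff,
    parityAccept_stateSeq_concatWord_iff, ← parityAccept_comp_add _ 1]
  simp only [hstart, codingBlocks, apply_ite (M.maxRankOn q)]
  exact parityAccept_ite_iff he ho hlt x

theorem continuous_spineTree_codingWord [Nonempty Alpha] [TopologicalSpace Alpha]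
    [DiscreteTopology Alpha] {p : Q} {u l₀ l₁ : List (Alpha × Bool)}
    (hb : ∀ x k, codingBlocks u l₀ l₁ x k ≠ []) :
    Continuous fun x => M.spineTree p (concatWord _ (hb x)) := by
  refine continuous_pi fun v => continuous_of_forall_cylinder fun x => ⟨v.length, fun y hy =>
    M.spineTree_congr fun i hi => concatWord_congr fun j hj => ?_⟩
  cases j with
  | zero => rfl
  | succ j => simp [codingBlocks, PiNat.mem_cylinder_iff.1 hy j (by omega)]

theorem not_isGδ_lang_of_hasFlower [TopologicalSpace Alpha] [DiscreteTopology Alpha] [Finite Q]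
    (hM : M.Normalized) (h : M.HasFlower 0 1) : ¬ IsGδ M.Lang := by
  obtain ⟨q, l₀, l₁, hl₀, hl₁, he, ho, hlt⟩ := M.hasFlower_zero_one_iff.1 h
  have : Nonempty Alpha := ⟨(l₀.head hl₀.1).1⟩
  obtain ⟨u, hu⟩ := hM.1 q
  have hb : ∀ x k, codingBlocks (u ++ l₀) l₀ l₁ x k ≠ [] := fun x k => by
    cases k with
    | zero => simp [codingBlocks, hl₀.1]
    | succ k => simp only [codingBlocks]; split; exacts [hl₁.1, hl₀.1]
  intro hL
  refine not_isGδ_setOf_eventually_eq_false ?_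
  convert hL.preimage (M.continuous_spineTree_codingWord (p := M.init) hb) using 1
  ext x
  exact (M.spineTree_codingWord_mem_lang_iff hM hl₀.2 hl₁.2 he ho hlt hu (hb x)).symm

end Hardness

end DPTA

theorem pi02_characterisation_general {Alpha Q : Type} [Fintype Q]
    [TopologicalSpace Alpha] [DiscreteTopology Alpha]
    (M : DPTA Alpha Q) (hM : M.Normalized) :
    IsPi02 M.Lang ↔ ¬ M.HasFlower 0 1 :=
  ⟨fun h hfl => M.not_isGδ_lang_of_hasFlower hM hfl h.isGδ, M.isPi02_lang_of_not_hasFlower⟩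

/-- the language of a normalized deterministic tree automaton is `Π⁰₂`
iff the automaton contains no `(0,1)`-flower. -/
theorem pi02_characterisation {Alpha Q : Type} [Fintype Alpha] [Nonempty Alpha] [Fintype Q]
    [TopologicalSpace Alpha] [DiscreteTopology Alpha]
    (M : DPTA Alpha Q) (hM : M.Normalized) :
    IsPi02 M.Lang ↔ ¬ M.HasFlower 0 1 :=
  pi02_characterisation_general M hM
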